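/- arXiv:1712.00875 — 2 statements merged into one kernel-verified Lean document; each statement's English description precedes it below -/
import Mathlib

section
/- Laplacian comparison with decaying curvature: Let G be a locally finite weighted graph with fixed vertex x₀ and sphere curvatures κ(r) := min_{y∈S_r} max_{x∈S_{r-1}, x~y} κ(x,y), where S_r is the sphere of radius r about x₀. Then for f := d(x₀,·) one has Δf(y) ≤ Deg(x₀) − Σ_{r=1}^{d(x₀,y)} κ(r) for all y ∈ V. Moreover, equality holds for all y when G is a birth-death chain with x₀ = 0. -/
open scoped BigOperators

/-- A locally finite weighted graph. -/
structure WeightedGraph (V : Type) where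
  w : V → V → ℝ
  m : V → ℝ
  symm : ∀ x y, w x y = w y x
  loopless : ∀ x, w x x = 0
  nonneg : ∀ x y, 0 ≤ w x y
  mpos : ∀ x, 0 < m x
  locFin : ∀ x, Set.Finite {y | w x y ≠ 0}

namespace WeightedGraph

variable {V : Type} (G : WeightedGraph V)

/-- The underlying simple graph. -/
def toSimple : SimpleGraph V where
  Adj x y := x ≠ y ∧ G.w x y ≠ 0
  symm := by
    constructor
    intro x y h
    exact ⟨h.1.symm, by rw [G.symm y x]; exact h.2⟩
  loopless := by constructor; intro x h; exact h.1 rfl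

/-- The combinatorial graph distance. -/
noncomputable def dist (x y : V) : ℕ := G.toSimple.dist x y

/-- The graph Laplacian. -/
noncomputable def lap (f : V → ℝ) (x : V) : ℝ :=
  (∑ᶠ y, G.w x y * (f y - f x)) / G.m x

/-- The weighted vertex degree. -/
noncomputable def deg (x : V) : ℝ := (∑ᶠ y, G.w x y) / G.m x

/-- `f` is `1`-Lipschitz with respect to the combinatorial distance. -/
def Lip1 (f : V → ℝ) : Prop := ∀ x y, |f x - f y| ≤ (G.dist x y : ℝ)

/-- The Ollivier curvature, via the limit-free formula
`κ(x,y) = inf {∇_{xy} Δ f : f ∈ Lip(1) ∩ C_c(V), ∇_{yx} f = 1}`. -/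
noncomputable def curv (x y : V) : ℝ :=
  sInf { c | ∃ f : V → ℝ, G.Lip1 f ∧ (Function.support f).Finite ∧
    f y - f x = (G.dist x y : ℝ) ∧ c = (G.lap f x - G.lap f y) / (G.dist x y : ℝ) }

end WeightedGraph

/-- The sphere curvature `κ(r) = min_{y ∈ S_r} max_{x ∈ S_{r-1}, x ∼ y} κ(x,y)` about `x₀`. -/
noncomputable def sphCurv {V : Type} (G : WeightedGraph V) (x₀ : V) (r : ℕ) : ℝ :=
  sInf { c | ∃ y, G.dist x₀ y = r ∧
    c = sSup { c' | ∃ x, G.dist x₀ x = r - 1 ∧ G.toSimple.Adj x y ∧ c' = G.curv x y } }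

/-- The measure of the sphere of radius `r` about `x₀`. -/
noncomputable def sphM {V : Type} (G : WeightedGraph V) (x₀ : V) (r : ℕ) : ℝ :=
  ∑ᶠ x ∈ {z | G.dist x₀ z = r}, G.m x

/-- The total edge weight between the spheres of radii `r` and `r+1` about `x₀`. -/
noncomputable def sphW {V : Type} (G : WeightedGraph V) (x₀ : V) (r : ℕ) : ℝ :=
  ∑ᶠ x ∈ {z | G.dist x₀ z = r}, ∑ᶠ y ∈ {z | G.dist x₀ z = r + 1}, G.w x y

/-- The Laplacian of a birth-death chain with forward weights `a` (i.e. `w(r,r+1) = a r`)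
and measure `mm`. -/
noncomputable def bdLap (a mm : ℕ → ℝ) (g : ℕ → ℝ) (r : ℕ) : ℝ :=
  (a r * (g (r + 1) - g r) + (if r = 0 then 0 else a (r - 1) * (g (r - 1) - g r))) / mm r

/-!
Write `f = d(x₀,·)`. If `x ∈ S_{r-1}` and `y ∈ S_r` are adjacent, the truncated distance
`min (f, r + 1) - (r + 1)` is finitely supported, `1`-Lipschitz, increases by `1` from `x` to `y`,
and has the same Laplacian as `f` at `x` and `y`; as a test function in the definition of `κ(x,y)`
it gives `κ(x,y) ≤ Δf(x) - Δf(y)`. Choosing `x` to maximise `κ(x,y)` gives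
`Δf(y) ≤ Δf(x) - κ(r)`, and induction on `r` starting from `Δf(x₀) = Deg(x₀)` proves the bound.

On a birth-death chain rooted at `0` every sphere is a single point and `f` is the identity.
Any admissible test function `g` for the edge `(r, r+1)` has slope `1` on that edge and at most `1`
elsewhere, so `Δg(r) ≥ Δf(r)` and `Δg(r+1) ≤ Δf(r+1)`; hence `κ(r, r+1) = Δf(r) - Δf(r+1)` and
the sum telescopes to an equality.
-/

namespace SimpleGraph

variable {V : Type*} {G : SimpleGraph V}

lemma Adj.dist_le_dist_add_one {u v w : V} (h : G.Adj v w) : G.dist u w ≤ G.dist u v + 1 := by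
  simpa [dist_eq_one_iff_adj.mpr h] using h.reachable.dist_triangle_right u

lemma Connected.abs_dist_sub_dist_le (hconn : G.Connected) (u v w : V) :
    |(G.dist u v : ℝ) - G.dist u w| ≤ G.dist v w := by
  have hvw : (G.dist u v : ℝ) ≤ G.dist u w + G.dist v w := by
    exact_mod_cast (hconn.dist_triangle (v := w)).trans_eq (by rw [dist_comm (u := w)])
  have hwv : (G.dist u w : ℝ) ≤ G.dist u v + G.dist v w := by exact_mod_cast hconn.dist_triangle
  rw [abs_sub_le_iff]
  constructor <;> linarith

lemma Connected.exists_adj_dist_eq_of_dist_eq_succ (hconn : G.Connected) {u v : V} {n : ℕ}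
    (h : G.dist u v = n + 1) : ∃ w, G.Adj w v ∧ G.dist u w = n := by
  obtain ⟨p, hp⟩ := hconn.exists_walk_length_eq_dist u v
  have hnil : ¬p.Nil := by rw [← Walk.length_eq_zero_iff]; omega
  refine ⟨p.penultimate, p.adj_penultimate hnil, le_antisymm ?_ ?_⟩
  · have := dist_le p.dropLast
    rw [Walk.length_dropLast] at this
    omega
  · have := (p.adj_penultimate hnil).dist_le_dist_add_one (u := u)
    omega

lemma Connected.finite_setOf_dist_le (hconn : G.Connected)
    (hfin : ∀ v, (G.neighborSet v).Finite) (u : V) (R : ℕ) : {v | G.dist u v ≤ R}.Finite := by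
  induction R with
  | zero => simp [hconn.dist_eq_zero_iff]
  | succ R ih =>
    refine (ih.union (ih.biUnion fun v _ => hfin v)).subset fun v hv => ?_
    rcases Nat.le_succ_iff.mp hv with hle | heq
    · exact Or.inl hle
    · obtain ⟨w, hwv, hw⟩ := hconn.exists_adj_dist_eq_of_dist_eq_succ heq
      exact Or.inr (Set.mem_biUnion hw.le hwv)

end SimpleGraph

namespace WeightedGraph

variable {V : Type} (G : WeightedGraph V)

lemma toSimple_adj_of_w_ne_zero {x y : V} (h : G.w x y ≠ 0) : G.toSimple.Adj x y :=
  ⟨fun hxy => h (hxy ▸ G.loopless x), h⟩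

lemma dist_eq_one_of_adj {x y : V} (h : G.toSimple.Adj x y) : G.dist x y = 1 :=
  SimpleGraph.dist_eq_one_iff_adj.mpr h

lemma neighborSet_finite (x : V) : (G.toSimple.neighborSet x).Finite :=
  (G.locFin x).subset fun _ h => h.2

lemma lap_congr {f g : V → ℝ} {x : V} (hx : f x = g x)
    (h : ∀ y, G.toSimple.Adj x y → f y = g y) : G.lap f x = G.lap g x := by
  unfold lap
  congr 1
  refine finsum_congr fun y => ?_
  by_cases hw : G.w x y = 0
  · simp [hw]
  · rw [hx, h y (G.toSimple_adj_of_w_ne_zero hw)]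

lemma lap_sub_const (f : V → ℝ) (c : ℝ) (x : V) :
    G.lap (fun z => f z - c) x = G.lap f x := by
  simp only [lap, sub_sub_sub_cancel_right]

variable {G} in
lemma Lip1.abs_sub_le_one {f : V → ℝ} (hf : G.Lip1 f) {x y : V} (h : G.toSimple.Adj x y) :
    |f y - f x| ≤ 1 := by
  simpa [G.dist_eq_one_of_adj h.symm] using hf y x

lemma abs_lap_le_deg {f : V → ℝ} (hf : G.Lip1 f) (x : V) : |G.lap f x| ≤ G.deg x := by
  have hsupp : ∀ g : V → ℝ, (Function.support g) ⊆ {y | G.w x y ≠ 0} →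
      ∑ᶠ y, g y = ∑ y ∈ (G.locFin x).toFinset, g y := fun g hg =>
    finsum_eq_sum_of_support_subset g (by simpa using hg)
  rw [lap, deg, hsupp (fun y => G.w x y * (f y - f x)) fun y hy => left_ne_zero_of_mul hy,
    hsupp (G.w x) fun y hy => hy, abs_div, abs_of_pos (G.mpos x)]
  refine div_le_div_of_nonneg_right ?_ (G.mpos x).le
  refine (Finset.abs_sum_le_sum_abs _ _).trans (Finset.sum_le_sum fun y _ => ?_)
  rw [abs_mul, abs_of_nonneg (G.nonneg x y)]
  by_cases hw : G.w x y = 0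
  · simp [hw]
  · exact mul_le_of_le_one_right (G.nonneg x y)
      (hf.abs_sub_le_one (G.toSimple_adj_of_w_ne_zero hw))

lemma curv_le_of_lip1 (hconn : G.toSimple.Connected) {x y : V} (hxy : x ≠ y) {f : V → ℝ}
    (hf : G.Lip1 f) (hfs : (Function.support f).Finite) (hfxy : f y - f x = G.dist x y) :
    G.curv x y ≤ (G.lap f x - G.lap f y) / G.dist x y := by
  refine csInf_le ⟨-(G.deg x + G.deg y), ?_⟩ ⟨f, hf, hfs, hfxy, rfl⟩
  rintro _ ⟨g, hg, -, -, rfl⟩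
  have hd : (1 : ℝ) ≤ G.dist x y := by exact_mod_cast hconn.pos_dist_of_ne hxy
  refine neg_le_of_abs_le ?_
  rw [abs_div, Nat.abs_cast]
  calc |G.lap g x - G.lap g y| / G.dist x y
      ≤ |G.lap g x - G.lap g y| := div_le_self (abs_nonneg _) hd
    _ ≤ |G.lap g x| + |G.lap g y| := abs_sub _ _
    _ ≤ G.deg x + G.deg y := add_le_add (G.abs_lap_le_deg hg x) (G.abs_lap_le_deg hg y)

noncomputable def truncDist (x₀ : V) (R : ℕ) (z : V) : ℝ :=
  min (G.dist x₀ z : ℝ) (R + 1) - (R + 1)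

lemma lip1_truncDist (hconn : G.toSimple.Connected) (x₀ : V) (R : ℕ) :
    G.Lip1 (G.truncDist x₀ R) := fun u v => by
  calc |G.truncDist x₀ R u - G.truncDist x₀ R v|
      = |min (G.dist x₀ u : ℝ) (R + 1) - min (G.dist x₀ v : ℝ) (R + 1)| := by
        rw [truncDist, truncDist, sub_sub_sub_cancel_right]
    _ ≤ max |(G.dist x₀ u : ℝ) - G.dist x₀ v| |((R : ℝ) + 1) - (R + 1)| :=
        abs_min_sub_min_le_max _ _ _ _
    _ = |(G.dist x₀ u : ℝ) - G.dist x₀ v| := by simp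
    _ ≤ G.dist u v := hconn.abs_dist_sub_dist_le x₀ u v

lemma finite_support_truncDist (hconn : G.toSimple.Connected) (x₀ : V) (R : ℕ) :
    (Function.support (G.truncDist x₀ R)).Finite := by
  refine (hconn.finite_setOf_dist_le G.neighborSet_finite x₀ R).subset fun z hz => ?_
  by_contra hR
  have hR' : (R : ℝ) + 1 ≤ G.dist x₀ z := by exact_mod_cast Nat.lt_of_not_le hR
  exact hz (by rw [truncDist, min_eq_right hR', sub_self])

lemma truncDist_of_dist_le {x₀ z : V} {R : ℕ} (hz : G.dist x₀ z ≤ R + 1) :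
    G.truncDist x₀ R z = G.dist x₀ z - (R + 1) := by
  rw [truncDist, min_eq_left (by exact_mod_cast hz)]

lemma lap_truncDist (x₀ : V) {R : ℕ} {v : V} (hv : G.dist x₀ v ≤ R) :
    G.lap (G.truncDist x₀ R) v = G.lap (fun z => (G.dist x₀ z : ℝ)) v := by
  rw [← G.lap_sub_const (fun z => (G.dist x₀ z : ℝ)) (R + 1)]
  refine G.lap_congr (G.truncDist_of_dist_le (by omega)) fun z hz => G.truncDist_of_dist_le ?_
  exact (hz.dist_le_dist_add_one (u := x₀)).trans (by simpa [dist] using hv)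

lemma exists_lip1_lap_dist_sub_eq (hconn : G.toSimple.Connected) (x₀ : V) {x y : V}
    (hxy : G.toSimple.Adj x y) (hd : G.dist x₀ y = G.dist x₀ x + 1) :
    ∃ f : V → ℝ, G.Lip1 f ∧ (Function.support f).Finite ∧ f y - f x = G.dist x y ∧
      G.lap (fun z => (G.dist x₀ z : ℝ)) x - G.lap (fun z => (G.dist x₀ z : ℝ)) y =
        (G.lap f x - G.lap f y) / G.dist x y := by
  refine ⟨G.truncDist x₀ (G.dist x₀ y), G.lip1_truncDist hconn x₀ _,
    G.finite_support_truncDist hconn x₀ _, ?_, ?_⟩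
  · rw [G.truncDist_of_dist_le (by omega), G.truncDist_of_dist_le (by omega),
      G.dist_eq_one_of_adj hxy, hd]
    push_cast
    ring
  · rw [G.dist_eq_one_of_adj hxy, Nat.cast_one, div_one, G.lap_truncDist x₀ le_rfl,
      G.lap_truncDist x₀ (by omega)]

lemma curv_le_lap_dist_sub (hconn : G.toSimple.Connected) (x₀ : V) {x y : V}
    (hxy : G.toSimple.Adj x y) (hd : G.dist x₀ y = G.dist x₀ x + 1) :
    G.curv x y ≤
      G.lap (fun z => (G.dist x₀ z : ℝ)) x - G.lap (fun z => (G.dist x₀ z : ℝ)) y := by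
  obtain ⟨f, hf, hfs, hfxy, heq⟩ := G.exists_lip1_lap_dist_sub_eq hconn x₀ hxy hd
  exact heq ▸ G.curv_le_of_lip1 hconn hxy.ne hf hfs hfxy

lemma lap_dist_self (x₀ : V) : G.lap (fun z => (G.dist x₀ z : ℝ)) x₀ = G.deg x₀ := by
  unfold lap deg
  congr 1
  refine finsum_congr fun y => ?_
  by_cases hw : G.w x₀ y = 0
  · simp [hw]
  · have h0 : G.dist x₀ x₀ = 0 := SimpleGraph.dist_self
    simp [h0, G.dist_eq_one_of_adj (G.toSimple_adj_of_w_ne_zero hw)]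

lemma exists_adj_sphCurv_le_curv (hconn : G.toSimple.Connected) {x₀ y : V} {n : ℕ}
    (hy : G.dist x₀ y = n + 1) :
    ∃ x, G.toSimple.Adj x y ∧ G.dist x₀ x = n ∧ sphCurv G x₀ (n + 1) ≤ G.curv x y := by
  have hball := hconn.finite_setOf_dist_le G.neighborSet_finite x₀
  set A := {c' | ∃ x, G.dist x₀ x = n + 1 - 1 ∧ G.toSimple.Adj x y ∧ c' = G.curv x y}
  have hA : A.Finite := ((hball n).image fun x => G.curv x y).subset <| by
    rintro _ ⟨x, hx, -, rfl⟩
    exact ⟨x, by simp [dist] at hx ⊢; omega, rfl⟩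
  obtain ⟨x, hxy, hx⟩ := hconn.exists_adj_dist_eq_of_dist_eq_succ hy
  have hAne : A.Nonempty := ⟨_, x, by rwa [Nat.add_sub_cancel], hxy, rfl⟩
  obtain ⟨x', hx', hx'y, hmax⟩ := hAne.csSup_mem hA
  refine ⟨x', hx'y, by rwa [Nat.add_sub_cancel] at hx', ?_⟩
  refine hmax ▸ csInf_le (Set.Finite.bddBelow ?_) ⟨y, hy, rfl⟩
  refine ((hball (n + 1)).image fun y' => sSup {c' | ∃ x, G.dist x₀ x = n + 1 - 1 ∧
    G.toSimple.Adj x y' ∧ c' = G.curv x y'}).subset ?_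
  rintro _ ⟨y', hy', rfl⟩
  exact ⟨y', hy'.le, rfl⟩

theorem lap_dist_le_deg_sub_sum_sphCurv (hconn : G.toSimple.Connected) (x₀ y : V) :
    G.lap (fun z => (G.dist x₀ z : ℝ)) y ≤
      G.deg x₀ - ∑ r ∈ Finset.Icc 1 (G.dist x₀ y), sphCurv G x₀ r := by
  induction hn : G.dist x₀ y generalizing y with
  | zero =>
    obtain rfl := hconn.dist_eq_zero_iff.mp hn
    simp [lap_dist_self]
  | succ n ih =>
    obtain ⟨x, hxy, hx, hκ⟩ := G.exists_adj_sphCurv_le_curv hconn hn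
    have hcurv := G.curv_le_lap_dist_sub hconn x₀ hxy (by omega)
    rw [Finset.sum_Icc_succ_top (by omega)]
    linarith [ih x hx]

end WeightedGraph

section BirthDeath

variable {a mm g : ℕ → ℝ} {r : ℕ}

lemma bdLap_natCast_le (ha : ∀ s, 0 ≤ a s) (hm : 0 < mm r)
    (hg : ∀ s, |g (s + 1) - g s| ≤ 1) (hr : g (r + 1) - g r = 1) :
    bdLap a mm (fun s => (s : ℝ)) r ≤ bdLap a mm g r := by
  refine div_le_div_of_nonneg_right ?_ hm.le
  rcases r with _ | r
  · simp [hr]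
  · have := le_of_abs_le (hg r)
    simp only [Nat.add_sub_cancel, hr, if_neg r.succ_ne_zero]
    push_cast
    nlinarith [ha r]

lemma bdLap_succ_le_natCast (ha : ∀ s, 0 ≤ a s) (hm : 0 < mm (r + 1))
    (hg : ∀ s, |g (s + 1) - g s| ≤ 1) (hr : g (r + 1) - g r = 1) :
    bdLap a mm g (r + 1) ≤ bdLap a mm (fun s => (s : ℝ)) (r + 1) := by
  refine div_le_div_of_nonneg_right ?_ hm.le
  have := le_of_abs_le (hg (r + 1))
  simp only [Nat.add_sub_cancel, if_neg r.succ_ne_zero]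
  push_cast
  nlinarith [ha r, ha (r + 1)]

end BirthDeath

namespace WeightedGraph

structure IsBirthDeathChain (H : WeightedGraph ℕ) : Prop where
  w_eq_zero : ∀ r s : ℕ, s ≠ r + 1 → r ≠ s + 1 → H.w r s = 0
  w_succ_pos : ∀ r : ℕ, 0 < H.w r (r + 1)

namespace IsBirthDeathChain

variable {H : WeightedGraph ℕ} (hH : H.IsBirthDeathChain)
include hH

lemma adj_succ (r : ℕ) : H.toSimple.Adj r (r + 1) :=
  ⟨by omega, (hH.w_succ_pos r).ne'⟩

lemma le_succ_of_adj {r s : ℕ} (h : H.toSimple.Adj r s) : s ≤ r + 1 := by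
  by_contra hs
  exact h.2 (hH.w_eq_zero r s (by omega) (by omega))

lemma connected : H.toSimple.Connected := by
  refine H.toSimple.connected_iff_exists_forall_reachable.mpr ⟨0, fun n => ?_⟩
  induction n with
  | zero => rfl
  | succ n ih => exact ih.trans (hH.adj_succ n).reachable

lemma dist_zero (y : ℕ) : H.dist 0 y = y := by
  have hwalk : ∀ {u v : ℕ} (p : H.toSimple.Walk u v), v ≤ u + p.length := by
    intro u v p
    induction p with
    | nil => simp
    | cons h _ ih =>
      have := hH.le_succ_of_adj h
      rw [SimpleGraph.Walk.length_cons]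
      omega
  show H.toSimple.dist 0 y = y
  refine le_antisymm ?_ ?_
  · induction y with
    | zero => exact SimpleGraph.dist_self.le
    | succ y ih => exact ((hH.adj_succ y).dist_le_dist_add_one).trans (by omega)
  · obtain ⟨p, hp⟩ := hH.connected.exists_walk_length_eq_dist 0 y
    simpa [hp] using hwalk p

lemma natCast_dist_zero : (fun z => (H.dist 0 z : ℝ)) = fun z : ℕ => (z : ℝ) := by
  simp only [hH.dist_zero]

lemma lap_eq_bdLap (F : ℕ → ℝ) (r : ℕ) :
    H.lap F r = bdLap (fun s => H.w s (s + 1)) H.m F r := by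
  have hsupp :
      Function.support (fun s => H.w r s * (F s - F r)) ⊆ ({r + 1, r - 1} : Finset ℕ) := by
    intro s hs
    have := left_ne_zero_of_mul hs
    have : s = r + 1 ∨ r = s + 1 := by
      by_contra! h
      exact this (hH.w_eq_zero r s h.1 h.2)
    simp only [Finset.coe_insert, Finset.coe_singleton, Set.mem_insert_iff, Set.mem_singleton_iff]
    omega
  rw [lap, bdLap, finsum_eq_sum_of_support_subset _ hsupp, Finset.sum_pair (by omega)]
  rcases r with _ | r
  · simp [H.loopless]
  · simp [H.symm (r + 1) r]

lemma curv_eq (r : ℕ) :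
    H.curv r (r + 1) =
      H.lap (fun z : ℕ => (z : ℝ)) r - H.lap (fun z : ℕ => (z : ℝ)) (r + 1) := by
  have hd : H.dist 0 (r + 1) = H.dist 0 r + 1 := by simp [hH.dist_zero]
  have hex := H.exists_lip1_lap_dist_sub_eq hH.connected 0 (hH.adj_succ r) hd
  rw [hH.natCast_dist_zero] at hex
  have hle := H.curv_le_lap_dist_sub hH.connected 0 (hH.adj_succ r) hd
  rw [hH.natCast_dist_zero] at hle
  refine le_antisymm hle (le_csInf ⟨_, hex⟩ ?_)
  rintro _ ⟨g, hg, -, hgr, rfl⟩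
  rw [H.dist_eq_one_of_adj (hH.adj_succ r), Nat.cast_one] at hgr ⊢
  have hslope : ∀ s, |g (s + 1) - g s| ≤ 1 := fun s => hg.abs_sub_le_one (hH.adj_succ s)
  have ha : ∀ s, 0 ≤ H.w s (s + 1) := fun s => H.nonneg s (s + 1)
  simp only [hH.lap_eq_bdLap, div_one]
  linarith [bdLap_natCast_le ha (H.mpos r) hslope hgr,
    bdLap_succ_le_natCast ha (H.mpos (r + 1)) hslope hgr]

lemma sphCurv_succ (r : ℕ) : sphCurv H 0 (r + 1) = H.curv r (r + 1) := by
  simp [sphCurv, hH.dist_zero, hH.adj_succ]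

theorem lap_dist_eq_deg_sub_sum_sphCurv (y : ℕ) :
    H.lap (fun z => (H.dist 0 z : ℝ)) y =
      H.deg 0 - ∑ r ∈ Finset.Icc 1 (H.dist 0 y), sphCurv H 0 r := by
  have h0 := H.lap_dist_self 0
  rw [hH.natCast_dist_zero] at h0 ⊢
  rw [hH.dist_zero]
  induction y with
  | zero => simpa using h0
  | succ y ih =>
    rw [Finset.sum_Icc_succ_top (by omega), hH.sphCurv_succ, hH.curv_eq]
    linarith

end IsBirthDeathChain

end WeightedGraph

theorem stmt13_general {V : Type} (G : WeightedGraph V)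
    (hconn : G.toSimple.Connected) (x₀ : V) :
    (∀ y, G.lap (fun z => (G.dist x₀ z : ℝ)) y ≤
      G.deg x₀ - ∑ r ∈ Finset.Icc 1 (G.dist x₀ y), sphCurv G x₀ r) ∧
    (∀ H : WeightedGraph ℕ, (∀ r s : ℕ, s ≠ r + 1 → r ≠ s + 1 → H.w r s = 0) →
      (∀ r : ℕ, 0 < H.w r (r + 1)) →
      ∀ y : ℕ, H.lap (fun z => (H.dist 0 z : ℝ)) y =
        H.deg 0 - ∑ r ∈ Finset.Icc 1 (H.dist 0 y), sphCurv H 0 r) :=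
  ⟨G.lap_dist_le_deg_sub_sum_sphCurv hconn x₀, fun _ hw hpos =>
    (WeightedGraph.IsBirthDeathChain.mk hw hpos).lap_dist_eq_deg_sub_sum_sphCurv⟩

/-- Laplacian comparison with decaying curvature: `Δ d(x₀,·)(y) ≤ Deg(x₀) - ∑_{r=1}^{d(x₀,y)} κ(r)`
where `κ(r)` are the sphere curvatures; equality holds on birth-death chains rooted at `0`. -/
theorem stmt13 {V : Type} [Countable V] (G : WeightedGraph V)
    (hconn : G.toSimple.Connected) (x₀ : V) :
    (∀ y, G.lap (fun z => (G.dist x₀ z : ℝ)) y ≤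
      G.deg x₀ - ∑ r ∈ Finset.Icc 1 (G.dist x₀ y), sphCurv G x₀ r) ∧
    (∀ H : WeightedGraph ℕ, (∀ r s : ℕ, s ≠ r + 1 → r ≠ s + 1 → H.w r s = 0) →
      (∀ r : ℕ, 0 < H.w r (r + 1)) →
      ∀ y : ℕ, H.lap (fun z => (H.dist 0 z : ℝ)) y =
        H.deg 0 - ∑ r ∈ Finset.Icc 1 (H.dist 0 y), sphCurv H 0 r) :=
  stmt13_general G hconn x₀
end

section
/- For ε>0 let G_ε=(ℕ₀,w,m) be the birth-death chain with m ≡ 1 and w(R,R+1) = 1 + Σ_{r=1}^R Σ_{k=1}^r (log k)^{1+ε}. Then G_ε is stochastically incomplete and its Ollivier curvature satisfies κ(r-1,r) = −(log r)^{1+ε} ≥ −(log r)^{1+ε} for all r ≥ 2. -/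
/-!
With `m ≡ 1` the Laplacian at `n + 1` only sees the edges to `n` and `n + 2`. For `f` 1-Lipschitz
with `f (n + 2) - f (n + 1) = 1` this gives
`Δf (n + 1) - Δf (n + 2) ≥ 2 w(n+1, n+2) - w(n, n+1) - w(n+2, n+3)`, with equality for a tent
function, so the curvature is minus the second difference of `R ↦ w(R, R+1)`, which is
`-(log (n + 2))^{1+ε}` by construction. For incompleteness, `w(R, R+1) ≳ R² (log R)^{1+ε}`, so
`∑ (r + 1) / w(r, r+1)` is dominated by the Bertrand series `∑ 1 / (r (log r)^{1+ε})`, which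
converges by Cauchy condensation.
-/

open scoped BigOperators

/-- `u` is a non-negative bounded solution of the heat equation with initial datum `f`. -/
def IsHeatSolution {V : Type} (G : WeightedGraph V) (f : V → ℝ) (u : ℝ → V → ℝ) : Prop :=
  u 0 = f ∧ (∀ t x, 0 ≤ t → 0 ≤ u t x) ∧ (∃ C, ∀ t x, 0 ≤ t → u t x ≤ C) ∧
  ∀ x t, 0 ≤ t → HasDerivWithinAt (fun s => u s x) (G.lap (u t) x) (Set.Ici 0) t

/-- `P` is the minimal heat semigroup: for every non-negative bounded `f`, `t ↦ P t f` is the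
smallest non-negative bounded solution of the heat equation with initial datum `f`; on signed
bounded functions it is given by linearity from the positive and negative parts. -/
def IsHeatSemigroup {V : Type} (G : WeightedGraph V) (P : ℝ → (V → ℝ) → V → ℝ) : Prop :=
  (∀ f : V → ℝ, (∀ x, 0 ≤ f x) → (∃ C, ∀ x, f x ≤ C) →
    IsHeatSolution G f (fun t => P t f) ∧
    ∀ u, IsHeatSolution G f u → ∀ t x, 0 ≤ t → P t f x ≤ u t x) ∧
  (∀ f : V → ℝ, (∃ C, ∀ x, |f x| ≤ C) → ∀ t x,
    P t f x = P t (fun y => max (f y) 0) x - P t (fun y => max (-f y) 0) x)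

open Real Finset Filter

-- Truncated subtraction makes this vanish from `2 * N` on.
noncomputable def tent (N n : ℕ) : ℝ := (min n (2 * N - n) : ℕ)

theorem tent_of_le {N n : ℕ} (h : n ≤ N) : tent N n = n := by
  rw [tent, min_eq_left (by omega)]

theorem abs_tent_succ_sub_le (N n : ℕ) : |tent N (n + 1) - tent N n| ≤ 1 := by
  rw [abs_sub_le_iff, tent, tent]
  constructor <;> (rw [sub_le_iff_le_add]; norm_cast; omega)

theorem finite_support_tent (N : ℕ) : (Function.support (tent N)).Finite := by
  refine (Set.finite_Iio (2 * N)).subset fun n hn => ?_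
  by_contra h
  exact hn (by simp [tent, show 2 * N - n = 0 by rw [Set.mem_Iio, not_lt] at h; omega])

namespace WeightedGraph

theorem lip1_of_forall_adj {V : Type} (G : WeightedGraph V) (hconn : G.toSimple.Connected)
    {f : V → ℝ} (hf : ∀ a b, G.toSimple.Adj a b → |f a - f b| ≤ 1) : G.Lip1 f := by
  intro x y
  obtain ⟨p, hp⟩ := (hconn.preconnected x y).exists_walk_length_eq_dist
  rw [dist, ← hp]
  clear hp
  induction p with
  | nil => simp
  | @cons a b c hab _ ih =>
    rw [SimpleGraph.Walk.length_cons, Nat.cast_succ]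
    linarith [abs_sub_le (f a) (f b) (f c), hf a b hab]

section BirthDeath

variable (G : WeightedGraph ℕ)

theorem adj_succ (hne : ∀ n, G.w n (n + 1) ≠ 0) (n : ℕ) : G.toSimple.Adj n (n + 1) :=
  ⟨by omega, hne n⟩

theorem dist_succ (hne : ∀ n, G.w n (n + 1) ≠ 0) (n : ℕ) : G.dist n (n + 1) = 1 :=
  SimpleGraph.dist_eq_one_iff_adj.2 (G.adj_succ hne n)

theorem connected_of_w_succ_ne_zero (hne : ∀ n, G.w n (n + 1) ≠ 0) : G.toSimple.Connected := by
  refine (SimpleGraph.connected_iff_exists_forall_reachable _).2 ⟨0, fun n => ?_⟩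
  induction n with
  | zero => rfl
  | succ n ih => exact ih.trans (G.adj_succ hne n).reachable

theorem lip1_iff_abs_sub_succ_le (hbd : ∀ r s : ℕ, s ≠ r + 1 → r ≠ s + 1 → G.w r s = 0)
    (hne : ∀ n, G.w n (n + 1) ≠ 0) {f : ℕ → ℝ} :
    G.Lip1 f ↔ ∀ n, |f (n + 1) - f n| ≤ 1 := by
  refine ⟨fun hf n => by simpa [dist_succ G hne, abs_sub_comm] using hf n (n + 1),
    fun hf => G.lip1_of_forall_adj (G.connected_of_w_succ_ne_zero hne) fun a b hab => ?_⟩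
  obtain rfl | rfl : b = a + 1 ∨ a = b + 1 := by
    by_contra! h
    exact hab.2 (hbd a b h.1 h.2)
  · rw [abs_sub_comm]; exact hf a
  · exact hf b

theorem lap_succ (hbd : ∀ r s : ℕ, s ≠ r + 1 → r ≠ s + 1 → G.w r s = 0)
    (hm : ∀ n, G.m n = 1) (f : ℕ → ℝ) (n : ℕ) :
    G.lap f (n + 1) = G.w (n + 1) (n + 2) * (f (n + 2) - f (n + 1))
      + G.w n (n + 1) * (f n - f (n + 1)) := by
  have hsupp : (Function.support fun y => G.w (n + 1) y * (f y - f (n + 1))) ⊆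
      (({n + 2, n} : Finset ℕ) : Set ℕ) := by
    intro y hy
    have hw : G.w (n + 1) y ≠ 0 := left_ne_zero_of_mul hy
    have : y = n + 2 ∨ y = n := by
      by_contra! h
      exact hw (hbd _ _ (by omega) (by omega))
    simpa using this
  rw [lap, hm, div_one, finsum_eq_sum_of_support_subset _ hsupp,
    sum_pair (by omega), G.symm (n + 1) n]

/-- The infimum is attained by a tent function; the lower bound only uses `|∇f| ≤ 1` on the two
outer edges. -/
theorem curv_succ (hbd : ∀ r s : ℕ, s ≠ r + 1 → r ≠ s + 1 → G.w r s = 0)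
    (hm : ∀ n, G.m n = 1) (hne : ∀ n, G.w n (n + 1) ≠ 0) (n : ℕ) :
    G.curv (n + 1) (n + 2) = 2 * G.w (n + 1) (n + 2) - G.w n (n + 1) - G.w (n + 2) (n + 3) := by
  have hlip (f : ℕ → ℝ) := G.lip1_iff_abs_sub_succ_le hbd hne (f := f)
  rw [curv, dist_succ G hne (n + 1)]
  refine IsLeast.csInf_eq ⟨⟨tent (n + 3), (hlip _).2 (abs_tent_succ_sub_le _),
    finite_support_tent _, ?_, ?_⟩, ?_⟩
  · norm_num [tent_of_le]
  · rw [lap_succ G hbd hm, lap_succ G hbd hm]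
    simp only [tent_of_le (by omega : n ≤ n + 3), tent_of_le (by omega : n + 1 ≤ n + 3),
      tent_of_le (by omega : n + 2 ≤ n + 3), tent_of_le (le_refl (n + 3))]
    push_cast
    ring
  · rintro c ⟨f, hf, -, hf12, rfl⟩
    have h01 := (abs_le.1 ((hlip f).1 hf n)).2
    have h23 := (abs_le.1 ((hlip f).1 hf (n + 2))).2
    rw [Nat.cast_one] at hf12
    rw [lap_succ G hbd hm, lap_succ G hbd hm, Nat.cast_one, div_one]
    simp only [show n + 1 + 1 = n + 2 from rfl, show n + 1 + 2 = n + 3 from rfl] at h23 ⊢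
    rw [hf12, show f (n + 1) - f (n + 2) = -1 by linarith]
    nlinarith [mul_le_mul_of_nonneg_left h01 (G.nonneg n (n + 1)),
      mul_le_mul_of_nonneg_left h23 (G.nonneg (n + 2) (n + 3))]

end BirthDeath

end WeightedGraph

noncomputable def iteratedSum (a : ℕ → ℝ) (R : ℕ) : ℝ := ∑ r ∈ Icc 1 R, ∑ k ∈ Icc 1 r, a k

theorem iteratedSum_add_two_sub (a : ℕ → ℝ) (n : ℕ) :
    iteratedSum a (n + 2) - 2 * iteratedSum a (n + 1) + iteratedSum a n = a (n + 2) := by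
  simp only [iteratedSum, sum_Icc_succ_top (show 1 ≤ n + 1 + 1 by omega),
    sum_Icc_succ_top (show 1 ≤ n + 1 by omega)]
  ring

theorem natCast_sub_mul_le_sum_Icc {a : ℕ → ℝ} (ha : Monotone a) (h0 : ∀ k, 0 ≤ a k) (m n : ℕ) :
    ((n - m : ℕ) : ℝ) * a (m + 1) ≤ ∑ k ∈ Icc 1 n, a k :=
  calc ((n - m : ℕ) : ℝ) * a (m + 1) = ∑ _k ∈ Icc (m + 1) n, a (m + 1) := by
        rw [sum_const, Nat.card_Icc, nsmul_eq_mul, Nat.add_sub_add_right]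
    _ ≤ ∑ k ∈ Icc (m + 1) n, a k := sum_le_sum fun k hk => ha (mem_Icc.1 hk).1
    _ ≤ ∑ k ∈ Icc 1 n, a k :=
        sum_le_sum_of_subset_of_nonneg (Icc_subset_Icc (by omega) le_rfl) fun k _ _ => h0 k

/-- Half of the `R` outer terms have at least `R / 4` inner terms of size at least `a (R / 4 + 1)`. -/
theorem sq_div_eight_mul_le_iteratedSum {a : ℕ → ℝ} (ha : Monotone a) (h0 : ∀ k, 0 ≤ a k)
    (R : ℕ) : (R : ℝ) ^ 2 / 8 * a (R / 4 + 1) ≤ iteratedSum a R := by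
  have hinner_mono : Monotone fun r => ∑ k ∈ Icc 1 r, a k := fun r s hrs =>
    sum_le_sum_of_subset_of_nonneg (Icc_subset_Icc le_rfl hrs) fun k _ _ => h0 k
  have hinner := natCast_sub_mul_le_sum_Icc ha h0 (R / 4) (R / 2 + 1)
  have houter := natCast_sub_mul_le_sum_Icc hinner_mono (fun r => sum_nonneg fun k _ => h0 k)
    (R / 2) R
  have hhalf : (R : ℝ) / 2 ≤ ((R - R / 2 : ℕ) : ℝ) := by
    rw [div_le_iff₀ two_pos]; exact_mod_cast (by omega : R ≤ (R - R / 2) * 2)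
  have hquarter : (R : ℝ) / 4 ≤ ((R / 2 + 1 - R / 4 : ℕ) : ℝ) := by
    rw [div_le_iff₀ four_pos]; exact_mod_cast (by omega : R ≤ (R / 2 + 1 - R / 4) * 4)
  have ha0 := h0 (R / 4 + 1)
  calc (R : ℝ) ^ 2 / 8 * a (R / 4 + 1) = R / 2 * (R / 4 * a (R / 4 + 1)) := by ring
    _ ≤ ((R - R / 2 : ℕ) : ℝ) * (((R / 2 + 1 - R / 4 : ℕ) : ℝ) * a (R / 4 + 1)) := by gcongr
    _ ≤ iteratedSum a R := houter.trans' (by gcongr)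

theorem monotone_log_natCast_rpow {L : ℝ} (hL : 0 ≤ L) : Monotone fun k : ℕ => log k ^ L := by
  intro m n hmn
  refine rpow_le_rpow (log_natCast_nonneg m) ?_ hL
  rcases m.eq_zero_or_pos with rfl | hm
  · simpa using log_natCast_nonneg n
  · exact log_le_log (by exact_mod_cast hm) (by exact_mod_cast hmn)

theorem log_div_two_le_log_div_four_add_one {R : ℕ} (hR : 16 ≤ R) :
    log R / 2 ≤ log ((R / 4 + 1 : ℕ) : ℝ) := by
  have hsq : R ≤ (R / 4 + 1) ^ 2 := by nlinarith [Nat.lt_div_mul_add (a := R) four_pos]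
  have hlog := log_le_log (by exact_mod_cast (by omega : 0 < R)) (Nat.cast_le (α := ℝ).2 hsq)
  rw [Nat.cast_pow, log_pow] at hlog
  push_cast at hlog ⊢
  linarith

theorem summable_inv_mul_log_rpow {L : ℝ} (hL : 1 < L) :
    Summable fun n : ℕ => ((n : ℝ) * log n ^ L)⁻¹ := by
  have hanti : ∀ᶠ n : ℕ in atTop, ((n + 1 : ℕ) * log (n + 1 : ℕ) ^ L : ℝ)⁻¹ ≤ (n * log n ^ L)⁻¹ := by
    filter_upwards [eventually_ge_atTop 2] with n hn
    have hn0 : (0 : ℝ) < n := by exact_mod_cast (by omega : 0 < n)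
    have hlog : 0 < log n := log_pos (by exact_mod_cast hn)
    have hsucc : (n : ℝ) ≤ (n + 1 : ℕ) := by push_cast; linarith
    exact inv_anti₀ (mul_pos hn0 (rpow_pos_of_pos hlog L)) (mul_le_mul hsucc
      (rpow_le_rpow hlog.le (log_le_log hn0 hsucc) (by linarith)) (by positivity) (by positivity))
  rw [← summable_condensed_iff_of_eventually_nonneg (Eventually.of_forall fun n => by positivity)
    hanti]
  have hcond (k : ℕ) : (2 : ℝ) ^ k * (((2 ^ k : ℕ) : ℝ) * log (2 ^ k : ℕ) ^ L)⁻¹ =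
      (log 2 ^ L)⁻¹ * ((k : ℝ) ^ L)⁻¹ := by
    rw [Nat.cast_pow, Nat.cast_ofNat, log_pow, mul_rpow (Nat.cast_nonneg k) (log_nonneg one_le_two)]
    field_simp
  simp_rw [hcond]
  exact (summable_nat_rpow_inv.2 hL).mul_left _

theorem summable_natCast_add_one_div_one_add_iteratedSum {L : ℝ} (hL : 1 < L) :
    Summable fun R : ℕ => ((R : ℝ) + 1) / (1 + iteratedSum (fun k => log k ^ L) R) := by
  have hL0 : 0 ≤ L := by linarith
  refine .of_norm_bounded_eventually_nat ((summable_inv_mul_log_rpow hL).mul_left (16 * 2 ^ L)) ?_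
  filter_upwards [eventually_ge_atTop 16] with R hR
  have hR0 : (16 : ℝ) ≤ R := by exact_mod_cast hR
  have hlog : 0 < log R := log_pos (by linarith)
  have hS : (R : ℝ) ^ 2 / 8 * (log R ^ L / 2 ^ L) ≤ iteratedSum (fun k => log k ^ L) R := by
    refine (sq_div_eight_mul_le_iteratedSum (monotone_log_natCast_rpow hL0)
      (fun k => rpow_nonneg (log_natCast_nonneg k) L) R).trans' ?_
    rw [← div_rpow hlog.le two_pos.le]
    gcongr
    exact log_div_two_le_log_div_four_add_one hR
  have hS0 : 0 ≤ (R : ℝ) ^ 2 / 8 * (log R ^ L / 2 ^ L) := by positivity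
  rw [Real.norm_of_nonneg (div_nonneg (by positivity) (by linarith))]
  calc ((R : ℝ) + 1) / (1 + iteratedSum (fun k => log k ^ L) R)
      ≤ 2 * R / ((R : ℝ) ^ 2 / 8 * (log R ^ L / 2 ^ L)) :=
        div_le_div₀ (by positivity) (by linarith) (by positivity) (by linarith)
    _ = 16 * 2 ^ L * ((R : ℝ) * log R ^ L)⁻¹ := by field_simp; ring

theorem stmt16_general (ε : ℝ) (hε : 0 < ε) (G : WeightedGraph ℕ)
    (hbd : ∀ r s : ℕ, s ≠ r + 1 → r ≠ s + 1 → G.w r s = 0)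
    (hm : ∀ n, G.m n = 1)
    (hw : ∀ R : ℕ, G.w R (R + 1) =
      1 + ∑ r ∈ Finset.Icc 1 R, ∑ k ∈ Finset.Icc 1 r, (Real.log k) ^ ((1 : ℝ) + ε))
    (P : ℝ → (ℕ → ℝ) → ℕ → ℝ)
    (hcrit : (∀ t : ℝ, 0 < t → ∀ x, P t (fun _ => 1) x = 1) ↔
      ¬ Summable (fun r : ℕ => ((r : ℝ) + 1) / G.w r (r + 1))) :
    (¬ ∀ t : ℝ, 0 < t → ∀ x, P t (fun _ => 1) x = 1) ∧
    ∀ r : ℕ, 2 ≤ r → G.curv (r - 1) r = -(Real.log r) ^ ((1 : ℝ) + ε) := by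
  have hw' (R : ℕ) : G.w R (R + 1) = 1 + iteratedSum (fun k => log k ^ (1 + ε)) R := hw R
  have hne (n : ℕ) : G.w n (n + 1) ≠ 0 := by
    have := sum_nonneg fun r (_ : r ∈ Icc 1 n) => sum_nonneg fun k (_ : k ∈ Icc 1 r) =>
      rpow_nonneg (log_natCast_nonneg k) (1 + ε)
    rw [hw]
    linarith
  refine ⟨fun hcomplete => hcrit.1 hcomplete ?_, fun r hr => ?_⟩
  · simp_rw [hw']
    exact summable_natCast_add_one_div_one_add_iteratedSum (by linarith)
  · obtain ⟨n, rfl⟩ : ∃ n, r = n + 2 := ⟨r - 2, by omega⟩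
    rw [show n + 2 - 1 = n + 1 from rfl, G.curv_succ hbd hm hne, hw' n, hw' (n + 1), hw' (n + 2)]
    linarith [iteratedSum_add_two_sub (fun k => log k ^ (1 + ε)) n]

/-- The birth-death chain with `m ≡ 1` and `w(R,R+1) = 1 + ∑_{r=1}^R ∑_{k=1}^r (log k)^{1+ε}` is
stochastically incomplete and has curvature `κ(r-1,r) = -(log r)^{1+ε}` for `r ≥ 2`.
(The Keller–Lenz–Wojciechowski completeness criterion is assumed as `hcrit`.) -/
theorem stmt16 (ε : ℝ) (hε : 0 < ε) (G : WeightedGraph ℕ)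
    (hbd : ∀ r s : ℕ, s ≠ r + 1 → r ≠ s + 1 → G.w r s = 0)
    (hm : ∀ n, G.m n = 1)
    (hw : ∀ R : ℕ, G.w R (R + 1) =
      1 + ∑ r ∈ Finset.Icc 1 R, ∑ k ∈ Finset.Icc 1 r, (Real.log k) ^ ((1 : ℝ) + ε))
    (P : ℝ → (ℕ → ℝ) → ℕ → ℝ) (hP : IsHeatSemigroup G P)
    (hcrit : (∀ t : ℝ, 0 < t → ∀ x, P t (fun _ => 1) x = 1) ↔
      ¬ Summable (fun r : ℕ => ((r : ℝ) + 1) / G.w r (r + 1))) :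
    (¬ ∀ t : ℝ, 0 < t → ∀ x, P t (fun _ => 1) x = 1) ∧
    ∀ r : ℕ, 2 ≤ r → G.curv (r - 1) r = -(Real.log r) ^ ((1 : ℝ) + ε) :=
  stmt16_general ε hε G hbd hm hw P hcrit
end
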